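/- Let p be a prime and let M be a 4×4 matrix over an algebraic closure of F_p that is a monomial matrix (product of a diagonal matrix and a permutation matrix) whose underlying permutation is odd. Then the characteristic polynomial of M has two roots α and -α for some α (i.e., its set of roots with multiplicity contains a pair of opposite elements), provided p ≠ 2. -/

import Mathlib

open Polynomial Matrix

private lemma aux_opposite_roots {K : Type*} [Field K] [IsAlgClosed K]
    (c : K) (hc : c ≠ 0) (n : ℕ) (hn : 0 < n) (f q : K[X])
    (hf : f = (X ^ (2 * n) - C c) * q) :
    ∃ α : K, α ≠ 0 ∧ f.IsRoot α ∧ f.IsRoot (-α) := by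
  obtain ⟨α, hα⟩ := IsAlgClosed.exists_pow_nat_eq c (by omega : 0 < 2 * n)
  have hne : α ≠ 0 := by
    rintro rfl; exact hc (by simpa [zero_pow (by omega : 2 * n ≠ 0)] using hα.symm)
  have h2 : (-α) ^ (2 * n) = c := by
    rw [neg_pow, Even.neg_one_pow ⟨n, by ring⟩, one_mul, hα]
  refine ⟨α, hne, ?_, ?_⟩ <;> simp [hf, IsRoot, hα, h2]

set_option maxHeartbeats 2000000 in
/-- A monomial `4×4` matrix over an algebraic closure of `F_p` (`p ≠ 2`) whose
underlying permutation is odd has a pair of opposite roots `α, -α` in its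
characteristic polynomial. -/
theorem monomial_matrix_odd_permutation_has_opposite_roots
    (p : ℕ) [Fact p.Prime] (hp : p ≠ 2)
    (σ : Equiv.Perm (Fin 4)) (hσ : Equiv.Perm.sign σ = -1)
    (d : Fin 4 → AlgebraicClosure (ZMod p)) (hd : ∀ i, d i ≠ 0)
    (M : Matrix (Fin 4) (Fin 4) (AlgebraicClosure (ZMod p)))
    (hM : ∀ i j, M i j = if i = σ j then d j else 0) :
    ∃ α : AlgebraicClosure (ZMod p),
      α ≠ 0 ∧ M.charpoly.IsRoot α ∧ M.charpoly.IsRoot (-α) := by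
  have h3 : (Fin.succ 2 : Fin 4) = 3 := rfl
  have h2c : (Fin.castSucc 2 : Fin 4) = 2 := rfl
  have hall : ∀ τ : Equiv.Perm (Fin 4), Equiv.Perm.sign τ = -1 → (τ = Equiv.swap 0 1 ∨ τ = Equiv.swap 0 2 ∨ τ = Equiv.swap 0 3 ∨
      τ = Equiv.swap 1 2 ∨ τ = Equiv.swap 1 3 ∨ τ = Equiv.swap 2 3
      ∨ τ = ([0,1,2,3] : List (Fin 4)).formPerm ∨ τ = ([0,1,3,2] : List (Fin 4)).formPerm
      ∨ τ = ([0,2,1,3] : List (Fin 4)).formPerm ∨ τ = ([0,2,3,1] : List (Fin 4)).formPerm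
      ∨ τ = ([0,3,1,2] : List (Fin 4)).formPerm ∨ τ = ([0,3,2,1] : List (Fin 4)).formPerm) := by
    decide
  have hcases := hall σ hσ
  clear hall
  obtain h | h | h | h | h | h | h | h | h | h | h | h := hcases <;> subst h
  · exact aux_opposite_roots _ (mul_ne_zero (hd 0) (hd 1)) 1 one_pos _
      ((X - C (d 2)) * (X - C (d 3))) (by
        rw [Matrix.charpoly]
        simp (config := {decide := true}) [Matrix.det_succ_row_zero, Fin.sum_univ_succ,
          charmatrix_apply, hM, Equiv.swap_apply_def, Fin.succAbove, h3, h2c, Matrix.diagonal_apply]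
        ring)
  · exact aux_opposite_roots _ (mul_ne_zero (hd 0) (hd 2)) 1 one_pos _
      ((X - C (d 1)) * (X - C (d 3))) (by
        rw [Matrix.charpoly]
        simp (config := {decide := true}) [Matrix.det_succ_row_zero, Fin.sum_univ_succ,
          charmatrix_apply, hM, Equiv.swap_apply_def, Fin.succAbove, h3, h2c, Matrix.diagonal_apply]
        ring)
  · exact aux_opposite_roots _ (mul_ne_zero (hd 0) (hd 3)) 1 one_pos _
      ((X - C (d 1)) * (X - C (d 2))) (by
        rw [Matrix.charpoly]
        simp (config := {decide := true}) [Matrix.det_succ_row_zero, Fin.sum_univ_succ,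
          charmatrix_apply, hM, Equiv.swap_apply_def, Fin.succAbove, h3, h2c, Matrix.diagonal_apply]
        ring)
  · exact aux_opposite_roots _ (mul_ne_zero (hd 1) (hd 2)) 1 one_pos _
      ((X - C (d 0)) * (X - C (d 3))) (by
        rw [Matrix.charpoly]
        simp (config := {decide := true}) [Matrix.det_succ_row_zero, Fin.sum_univ_succ,
          charmatrix_apply, hM, Equiv.swap_apply_def, Fin.succAbove, h3, h2c, Matrix.diagonal_apply]
        ring)
  · exact aux_opposite_roots _ (mul_ne_zero (hd 1) (hd 3)) 1 one_pos _
      ((X - C (d 0)) * (X - C (d 2))) (by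
        rw [Matrix.charpoly]
        simp (config := {decide := true}) [Matrix.det_succ_row_zero, Fin.sum_univ_succ,
          charmatrix_apply, hM, Equiv.swap_apply_def, Fin.succAbove, h3, h2c, Matrix.diagonal_apply]
        ring)
  · exact aux_opposite_roots _ (mul_ne_zero (hd 2) (hd 3)) 1 one_pos _
      ((X - C (d 0)) * (X - C (d 1))) (by
        rw [Matrix.charpoly]
        simp (config := {decide := true}) [Matrix.det_succ_row_zero, Fin.sum_univ_succ,
          charmatrix_apply, hM, Equiv.swap_apply_def, Fin.succAbove, h3, h2c, Matrix.diagonal_apply]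
        ring)
  all_goals {
    exact aux_opposite_roots _
      (mul_ne_zero (mul_ne_zero (mul_ne_zero (hd 0) (hd 1)) (hd 2)) (hd 3)) 2 two_pos _ 1 (by
        rw [Matrix.charpoly]
        simp (config := {decide := true}) [Matrix.det_succ_row_zero, Fin.sum_univ_succ,
          charmatrix_apply, hM, List.formPerm, Equiv.swap_apply_def,
          Fin.succAbove, h3, h2c, Matrix.diagonal_apply]
        ring) }
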